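/- arXiv:2310.09980 — 3 statements merged into one kernel-verified Lean document; each statement's English description precedes it below -/
import Mathlib

section
/- Let D ≥ 2 be a squarefree integer and K = ℚ(√D). There exists a totally positive α ∈ O_K with p_K(α) = 3 if and only if D ≠ 5. -/
noncomputable section

/-- `ω_D`, so that `(1, ω_D)` is an integral basis of `𝓞(ℚ(√D))`. -/
def omegaD (D : ℤ) : ℝ := if D % 4 = 1 then (1 + Real.sqrt D) / 2 else Real.sqrt D

/-- The Galois conjugate `ω_D′` of `ω_D`. -/
def omegaD' (D : ℤ) : ℝ := if D % 4 = 1 then (1 - Real.sqrt D) / 2 else -(Real.sqrt D)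

/-- `ξ_D = -ω_D′`. -/
def xiD (D : ℤ) : ℝ := -omegaD' D

/-- The real embedding of `𝓞 K`, an element `(x, y)` in the integral basis
`(1, ω_D)` being sent to `x + y ω_D`. -/
def emb (D : ℤ) (a : ℤ × ℤ) : ℝ := a.1 + a.2 * omegaD D

/-- The conjugate real embedding, sending `(x, y)` to `x + y ω_D′`. -/
def embConj (D : ℤ) (a : ℤ × ℤ) : ℝ := a.1 + a.2 * omegaD' D

/-- An element of `𝓞 K` is totally positive if it and its conjugate are positive. -/
def TotPos (D : ℤ) (a : ℤ × ℤ) : Prop := 0 < emb D a ∧ 0 < embConj D a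

/-- The partition function `p_K` of `K = ℚ(√D)`: the number of multisets of
totally positive integers of `K` with sum `α`. -/
def pK (D : ℤ) (α : ℤ × ℤ) : ℕ :=
  Nat.card {m : Multiset (ℤ × ℤ) // (∀ β ∈ m, TotPos D β) ∧ m.sum = α}

end

/-!
For `D ≠ 5` take `α = 3`. A totally positive integer `(t + s √D) / 2` has `D s² < t²` with
`t ≡ s mod 2`, so its trace `t` is at least `2`, equals `2` only for `1`, and is never `3`
(that needs `D ≡ 1 mod 4` and `D < 9`). Comparing traces, the partitions of `3` are
`3 = 2 + 1 = 1 + 1 + 1`.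

For `D = 5` write `p(α) = 1 + q(α)`, with `q(α)` counting the partitions into at least two parts.
If some partition has three parts `a, b, c` (and possibly more), merging two of them in two
different ways, or replacing `a + a + a` by `φ² a + φ⁻² a`, shows `q(α) ≥ 3`. Otherwise every
partition `β + γ` consists of units: the norm form `x² + xy - y²` never takes the value `2`, so a
totally positive non-unit has norm at least `3 > φ²` and splits off a unit `φ^(2n)`, which would
give three parts. Since the units satisfy `ε' = ε⁻¹`, a sum of two of them determines their
product, hence the pair, so `q(α) ≤ 1`.
-/

def partitions (D : ℤ) (α : ℤ × ℤ) : Set (Multiset (ℤ × ℤ)) :=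
  {m | (∀ β ∈ m, TotPos D β) ∧ m.sum = α}

lemma pK_eq_ncard (D : ℤ) (α : ℤ × ℤ) : pK D α = (partitions D α).ncard :=
  Nat.card_coe_set_eq _

section General

variable {D : ℤ}

lemma emb_add (a b : ℤ × ℤ) : emb D (a + b) = emb D a + emb D b := by
  simp only [emb, Prod.fst_add, Prod.snd_add]; push_cast; ring

lemma embConj_add (a b : ℤ × ℤ) : embConj D (a + b) = embConj D a + embConj D b := by
  simp only [embConj, Prod.fst_add, Prod.snd_add]; push_cast; ring

lemma emb_sub (a b : ℤ × ℤ) : emb D (a - b) = emb D a - emb D b := by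
  simp only [emb, Prod.fst_sub, Prod.snd_sub]; push_cast; ring

lemma embConj_sub (a b : ℤ × ℤ) : embConj D (a - b) = embConj D a - embConj D b := by
  simp only [embConj, Prod.fst_sub, Prod.snd_sub]; push_cast; ring

lemma TotPos.add {a b : ℤ × ℤ} (ha : TotPos D a) (hb : TotPos D b) : TotPos D (a + b) :=
  ⟨by rw [emb_add]; exact add_pos ha.1 hb.1, by rw [embConj_add]; exact add_pos ha.2 hb.2⟩

lemma TotPos.ne_zero {a : ℤ × ℤ} (h : TotPos D a) : a ≠ 0 := by
  rintro rfl
  simpa [emb] using h.1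

lemma totPos_mk_zero {n : ℤ} (hn : 0 < n) : TotPos D (n, 0) :=
  ⟨by simpa [emb] using hn, by simpa [embConj] using hn⟩

lemma singleton_mem_partitions {α : ℤ × ℤ} (h : TotPos D α) : {α} ∈ partitions D α :=
  ⟨by simpa using h, Multiset.sum_singleton α⟩

lemma pair_mem_partitions {α a b : ℤ × ℤ} (ha : TotPos D a) (hb : TotPos D b) (h : a + b = α) :
    {a, b} ∈ partitions D α :=
  ⟨by simp [ha, hb], by simpa using h⟩

lemma eq_singleton_of_mem_partitions {α : ℤ × ℤ} {m : Multiset (ℤ × ℤ)}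
    (hm : m ∈ partitions D α) (h : Multiset.card m = 1) : m = {α} := by
  obtain ⟨a, rfl⟩ := Multiset.card_eq_one.1 h
  simpa using hm.2

lemma card_ne_zero_of_mem_partitions {α : ℤ × ℤ} {m : Multiset (ℤ × ℤ)} (hα : TotPos D α)
    (hm : m ∈ partitions D α) : Multiset.card m ≠ 0 := by
  rw [Ne, Multiset.card_eq_zero]
  rintro rfl
  exact hα.ne_zero (by simpa using hm.2.symm)

lemma add_mem_partitions {α : ℤ × ℤ} {s r t : Multiset (ℤ × ℤ)} (hm : s + r ∈ partitions D α)
    (ht : t ∈ partitions D s.sum) : t + r ∈ partitions D α := by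
  refine ⟨fun β hβ => ?_, by rw [Multiset.sum_add, ht.2, ← Multiset.sum_add, hm.2]⟩
  rcases Multiset.mem_add.1 hβ with hβ | hβ
  · exact ht.1 β hβ
  · exact hm.1 β (Multiset.mem_add.2 (Or.inr hβ))

end General

lemma pair_add_ne_pair_add {M : Type*} [AddCancelCommMonoid M] {x y z : M} (hx : x ≠ 0)
    (hyz : y ≠ z) : ({x + y, z} : Multiset M) ≠ {x + z, y} := by
  intro h
  have hmem : x + y ∈ ({x + z, y} : Multiset M) := h ▸ Multiset.mem_cons_self _ _
  simp only [Multiset.insert_eq_cons, Multiset.mem_cons, Multiset.mem_singleton,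
    add_right_inj, add_eq_right] at hmem
  tauto

section Trace

variable {D : ℤ}

/-- The trace `x + x'`, for `x` with coordinates `a` in the basis `(1, ω_D)`. -/
def trace (D : ℤ) : ℤ × ℤ →+ ℤ where
  toFun a := if D % 4 = 1 then 2 * a.1 + a.2 else 2 * a.1
  map_zero' := by simp
  map_add' a b := by split_ifs <;> simp only [Prod.fst_add, Prod.snd_add] <;> ring

/-- The integer `s` with `x - x' = s √D`. -/
def sqrtCoeff (D : ℤ) (a : ℤ × ℤ) : ℤ := if D % 4 = 1 then a.2 else 2 * a.2

lemma emb_eq (a : ℤ × ℤ) : emb D a = (trace D a + sqrtCoeff D a * √D) / 2 := by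
  simp only [emb, omegaD, trace, sqrtCoeff, AddMonoidHom.coe_mk, ZeroHom.coe_mk]
  split_ifs <;> push_cast <;> ring

lemma embConj_eq (a : ℤ × ℤ) : embConj D a = (trace D a - sqrtCoeff D a * √D) / 2 := by
  simp only [embConj, omegaD', trace, sqrtCoeff, AddMonoidHom.coe_mk, ZeroHom.coe_mk]
  split_ifs <;> push_cast <;> ring

lemma two_dvd_trace_sub_sqrtCoeff (a : ℤ × ℤ) : 2 ∣ trace D a - sqrtCoeff D a := by
  simp only [trace, sqrtCoeff, AddMonoidHom.coe_mk, ZeroHom.coe_mk]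
  split_ifs
  exacts [⟨a.1, by ring⟩, ⟨a.1 - a.2, by ring⟩]

lemma TotPos.trace_pos {a : ℤ × ℤ} (h : TotPos D a) : 0 < trace D a := by
  have : (0 : ℝ) < trace D a := by linarith [h.1, h.2, emb_eq (D := D) a, embConj_eq (D := D) a]
  exact_mod_cast this

lemma TotPos.mul_sqrtCoeff_sq_lt (hD : 0 ≤ D) {a : ℤ × ℤ} (h : TotPos D a) :
    D * sqrtCoeff D a ^ 2 < trace D a ^ 2 := by
  have hsq : √(D : ℝ) ^ 2 = D := Real.sq_sqrt (by exact_mod_cast hD)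
  have key : (trace D a : ℝ) ^ 2 - D * sqrtCoeff D a ^ 2 = 4 * (emb D a * embConj D a) := by
    rw [emb_eq, embConj_eq]
    linear_combination (sqrtCoeff D a : ℝ) ^ 2 * hsq
  have : (D * sqrtCoeff D a ^ 2 : ℝ) < trace D a ^ 2 := by nlinarith [mul_pos h.1 h.2]
  exact_mod_cast this

lemma TotPos.two_le_trace (hD : 0 < D) {a : ℤ × ℤ} (h : TotPos D a) : 2 ≤ trace D a := by
  have hpar := two_dvd_trace_sub_sqrtCoeff (D := D) a
  have hlt := h.mul_sqrtCoeff_sq_lt hD.le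
  by_contra! h2
  have ht : trace D a = 1 := by linarith [h.trace_pos]
  have hs : sqrtCoeff D a ≠ 0 := by omega
  nlinarith [sq_pos_of_ne_zero hs]

lemma TotPos.eq_one_of_trace_eq_two (hD : 0 < D) {a : ℤ × ℤ} (h : TotPos D a)
    (ht : trace D a = 2) : a = (1, 0) := by
  have hpar := two_dvd_trace_sub_sqrtCoeff (D := D) a
  have hlt := h.mul_sqrtCoeff_sq_lt hD.le
  have hs : sqrtCoeff D a = 0 := by
    by_contra hs
    have : 4 ≤ sqrtCoeff D a ^ 2 := by
      rcases (show 2 ≤ sqrtCoeff D a ∨ sqrtCoeff D a ≤ -2 by omega) with h | h <;> nlinarith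
    nlinarith
  simp only [trace, sqrtCoeff, AddMonoidHom.coe_mk, ZeroHom.coe_mk] at ht hs
  obtain ⟨x, y⟩ := a
  split_ifs at ht hs <;> simp only [Prod.mk.injEq] <;> omega

lemma TotPos.trace_ne_three (hD : 2 ≤ D) (h5 : D ≠ 5) {a : ℤ × ℤ} (h : TotPos D a) :
    trace D a ≠ 3 := by
  intro ht
  have hpar := two_dvd_trace_sub_sqrtCoeff (D := D) a
  have hlt := h.mul_sqrtCoeff_sq_lt (by omega)
  have hs : sqrtCoeff D a ≠ 0 := by omega
  have hD9 : D < 9 := by nlinarith [sq_pos_of_ne_zero hs]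
  simp only [trace, AddMonoidHom.coe_mk, ZeroHom.coe_mk] at ht
  split_ifs at ht <;> omega

end Trace

section Three

variable {D : ℤ}

lemma two_mul_card_le_trace (hD : 0 < D) {α : ℤ × ℤ} {m : Multiset (ℤ × ℤ)}
    (hm : m ∈ partitions D α) : 2 * (Multiset.card m : ℤ) ≤ trace D α := by
  rw [← hm.2, map_multiset_sum, mul_comm, ← nsmul_eq_mul, ← Multiset.card_map (trace D)]
  refine Multiset.card_nsmul_le_sum fun t ht => ?_
  obtain ⟨β, hβ, rfl⟩ := Multiset.mem_map.1 ht
  exact (hm.1 β hβ).two_le_trace hD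

lemma trace_three : trace D (3, 0) = 6 := by
  simp only [trace, AddMonoidHom.coe_mk, ZeroHom.coe_mk]
  split_ifs <;> rfl

lemma eq_one_or_eq_two_of_totPos_three_sub (hD : 2 ≤ D) (h5 : D ≠ 5) {β : ℤ × ℤ}
    (hβ : TotPos D β) (h : TotPos D ((3, 0) - β)) : β = (1, 0) ∨ β = (2, 0) := by
  have htr := h.two_le_trace (by omega)
  rw [map_sub, trace_three] at htr
  rcases (show trace D β = 2 ∨ trace D β = 3 ∨ trace D β = 4 by
    have := hβ.two_le_trace (by omega); omega) with ht | ht | ht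
  · exact .inl (hβ.eq_one_of_trace_eq_two (by omega) ht)
  · exact absurd ht (hβ.trace_ne_three hD h5)
  · have := h.eq_one_of_trace_eq_two (by omega) (by rw [map_sub, trace_three, ht]; rfl)
    right
    rw [← sub_sub_cancel (3, 0) β, this]
    rfl

lemma partitions_three (hD : 2 ≤ D) (h5 : D ≠ 5) :
    partitions D (3, 0) = {{(3, 0)}, {(1, 0), (2, 0)}, {(1, 0), (1, 0), (1, 0)}} := by
  ext m
  simp only [Set.mem_insert_iff, Set.mem_singleton_iff]
  constructor
  · intro hm
    have hcard := two_mul_card_le_trace (by omega) hm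
    rw [trace_three] at hcard
    have hne := card_ne_zero_of_mem_partitions (totPos_mk_zero (by norm_num)) hm
    rcases (show Multiset.card m = 1 ∨ Multiset.card m = 2 ∨ Multiset.card m = 3 by omega)
      with h | h | h
    · exact .inl (eq_singleton_of_mem_partitions hm h)
    · obtain ⟨a, b, rfl⟩ := Multiset.card_eq_two.1 h
      have hsum : a + b = (3, 0) := by simpa using hm.2
      have hb : b = (3, 0) - a := eq_sub_of_add_eq' hsum
      right; left
      rcases eq_one_or_eq_two_of_totPos_three_sub hD h5 (hm.1 a (by simp))
        (hb ▸ hm.1 b (by simp)) with rfl | rfl <;> subst hb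
      · rfl
      · exact Multiset.pair_comm _ _
    · obtain ⟨a, b, c, rfl⟩ := Multiset.card_eq_three.1 h
      have htr : trace D a + trace D b + trace D c = 6 := by
        rw [← trace_three, ← hm.2]; simp only [Multiset.insert_eq_cons, Multiset.sum_cons,
          Multiset.sum_singleton, map_add]; ring
      have ha := hm.1 a (by simp)
      have hb := hm.1 b (by simp)
      have hc := hm.1 c (by simp)
      have := ha.two_le_trace (by omega)
      have := hb.two_le_trace (by omega)
      have := hc.two_le_trace (by omega)
      right; right
      rw [ha.eq_one_of_trace_eq_two (by omega) (by omega),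
        hb.eq_one_of_trace_eq_two (by omega) (by omega),
        hc.eq_one_of_trace_eq_two (by omega) (by omega)]
  · have h1 : TotPos D (1, 0) := totPos_mk_zero one_pos
    have h2 : TotPos D (2, 0) := totPos_mk_zero two_pos
    have h3 : TotPos D (3, 0) := totPos_mk_zero (by norm_num)
    rintro (rfl | rfl | rfl)
    · exact singleton_mem_partitions h3
    · exact ⟨by simp [h1, h2], by simp⟩
    · exact ⟨by simp [h1], by simp⟩

lemma pK_three (hD : 2 ≤ D) (h5 : D ≠ 5) : pK D (3, 0) = 3 := by
  rw [pK_eq_ncard, partitions_three hD h5]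
  exact Set.ncard_eq_three.2 ⟨_, _, _, by decide, by decide, by decide, rfl⟩

end Three

section Five

open Real
open scoped goldenRatio

lemma emb_five (a : ℤ × ℤ) : emb 5 a = a.1 + a.2 * φ := by
  simp [emb, omegaD, goldenRatio]

lemma embConj_five (a : ℤ × ℤ) : embConj 5 a = a.1 + a.2 * ψ := by
  simp [embConj, omegaD', goldenConj]

def normFive (a : ℤ × ℤ) : ℤ := a.1 ^ 2 + a.1 * a.2 - a.2 ^ 2

lemma emb_mul_embConj_five (a : ℤ × ℤ) : emb 5 a * embConj 5 a = normFive a := by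
  rw [emb_five, embConj_five, normFive]
  push_cast
  linear_combination (a.1 * a.2 : ℝ) * goldenRatio_add_goldenConj +
    (a.2 : ℝ) ^ 2 * goldenRatio_mul_goldenConj

lemma TotPos.one_le_normFive {a : ℤ × ℤ} (h : TotPos 5 a) : 1 ≤ normFive a := by
  have : (0 : ℝ) < normFive a := emb_mul_embConj_five a ▸ mul_pos h.1 h.2
  exact_mod_cast this

/-- `4 N(x + y ω) = (2x + y)² - 5y²`, and `8` is not a square mod `5`. -/
lemma normFive_ne_two (a : ℤ × ℤ) : normFive a ≠ 2 := by
  intro h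
  have key : (2 * a.1 + a.2) ^ 2 = 4 * 2 + 5 * a.2 ^ 2 := by
    rw [normFive] at h; linear_combination 4 * h
  have hmod := congrArg (Int.cast : ℤ → ZMod 5) key
  push_cast at hmod
  rw [show (5 : ZMod 5) = 0 from rfl, zero_mul, add_zero] at hmod
  exact (by decide : ∀ t : ZMod 5, t ^ 2 ≠ 4 * 2) _ hmod

lemma emb_five_injective : Function.Injective (emb 5) := by
  intro a b h
  rw [emb_five, emb_five] at h
  have hy : a.2 = b.2 := by
    by_contra hy
    have hne : ((a.2 - b.2 : ℤ) : ℚ) ≠ 0 := by exact_mod_cast sub_ne_zero.2 hy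
    apply goldenRatio_irrational.ratCast_mul hne
    exact ⟨b.1 - a.1, by push_cast; linarith⟩
  have hx : (a.1 : ℝ) = b.1 := by rw [hy] at h; linarith
  exact Prod.ext (by exact_mod_cast hx) hy

def mulOmegaSq (a : ℤ × ℤ) : ℤ × ℤ := (a.1 + a.2, a.1 + 2 * a.2)

def divOmegaSq (a : ℤ × ℤ) : ℤ × ℤ := (2 * a.1 - a.2, a.2 - a.1)

lemma mulOmegaSq_divOmegaSq (a : ℤ × ℤ) : mulOmegaSq (divOmegaSq a) = a := by
  ext <;> simp only [mulOmegaSq, divOmegaSq] <;> ring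

lemma mulOmegaSq_add_divOmegaSq (a : ℤ × ℤ) : mulOmegaSq a + divOmegaSq a = a + a + a := by
  ext <;> simp only [mulOmegaSq, divOmegaSq, Prod.fst_add, Prod.snd_add] <;> ring

lemma emb_mulOmegaSq (a : ℤ × ℤ) : emb 5 (mulOmegaSq a) = emb 5 a * φ ^ 2 := by
  simp only [emb_five, mulOmegaSq]
  push_cast
  linear_combination (-(a.1 : ℝ) - a.2 * (φ + 1)) * goldenRatio_sq

lemma embConj_mulOmegaSq (a : ℤ × ℤ) : embConj 5 (mulOmegaSq a) = embConj 5 a * ψ ^ 2 := by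
  simp only [embConj_five, mulOmegaSq]
  push_cast
  linear_combination (-(a.1 : ℝ) - a.2 * (ψ + 1)) * goldenConj_sq

lemma goldenConj_sq_pos : 0 < ψ ^ 2 := sq_pos_of_ne_zero goldenConj_ne_zero

lemma totPos_mulOmegaSq_iff {a : ℤ × ℤ} : TotPos 5 (mulOmegaSq a) ↔ TotPos 5 a := by
  rw [TotPos, TotPos, emb_mulOmegaSq, embConj_mulOmegaSq,
    mul_pos_iff_of_pos_right (by positivity), mul_pos_iff_of_pos_right goldenConj_sq_pos]

lemma totPos_divOmegaSq_iff {a : ℤ × ℤ} : TotPos 5 (divOmegaSq a) ↔ TotPos 5 a := by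
  rw [← totPos_mulOmegaSq_iff, mulOmegaSq_divOmegaSq]

lemma exists_emb_eq_zpow (n : ℤ) : ∃ u, emb 5 u = (φ ^ 2) ^ n ∧ embConj 5 u = (ψ ^ 2) ^ n := by
  induction n using Int.induction_on with
  | zero => exact ⟨(1, 0), by simp [emb_five], by simp [embConj_five]⟩
  | succ i ih =>
    obtain ⟨u, he, hc⟩ := ih
    refine ⟨mulOmegaSq u, ?_, ?_⟩
    · rw [emb_mulOmegaSq, he, zpow_add_one₀ (by positivity)]
    · rw [embConj_mulOmegaSq, hc, zpow_add_one₀ goldenConj_sq_pos.ne']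
  | pred i ih =>
    obtain ⟨u, he, hc⟩ := ih
    refine ⟨divOmegaSq u, ?_, ?_⟩
    · have := emb_mulOmegaSq (divOmegaSq u)
      rw [mulOmegaSq_divOmegaSq, he] at this
      rw [zpow_sub_one₀ (by positivity), this, mul_inv_cancel_right₀ (by positivity)]
    · have := embConj_mulOmegaSq (divOmegaSq u)
      rw [mulOmegaSq_divOmegaSq, hc] at this
      rw [zpow_sub_one₀ goldenConj_sq_pos.ne', this, mul_inv_cancel_right₀ goldenConj_sq_pos.ne']

/-- A non-unit has norm at least `3 > φ²`, so the unit `φ ^ (2 n)` with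
`φ ^ (2 n) < β ≤ φ ^ (2 n + 2)` lies below `β` in both embeddings. -/
lemma TotPos.exists_totPos_sub {β : ℤ × ℤ} (h : TotPos 5 β) (hN : normFive β ≠ 1) :
    ∃ ε, TotPos 5 ε ∧ TotPos 5 (β - ε) := by
  have hN3 : (3 : ℝ) ≤ emb 5 β * embConj 5 β := by
    rw [emb_mul_embConj_five]
    have := h.one_le_normFive
    have := normFive_ne_two β
    exact_mod_cast (by omega : 3 ≤ normFive β)
  have hφ2 : φ ^ 2 < 3 := by rw [goldenRatio_sq]; linarith [goldenRatio_lt_two]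
  obtain ⟨n, hlow, hup⟩ := exists_mem_Ioc_zpow h.1 (one_lt_pow₀ one_lt_goldenRatio two_ne_zero)
  obtain ⟨ε, he, hc⟩ := exists_emb_eq_zpow n
  have hq : 0 < (φ ^ 2) ^ n := by positivity
  have hq' : 0 < (ψ ^ 2) ^ n := zpow_pos goldenConj_sq_pos n
  have hqq' : (φ ^ 2) ^ n * (ψ ^ 2) ^ n = 1 := by
    rw [← mul_zpow, ← mul_pow, goldenRatio_mul_goldenConj]; simp
  rw [zpow_add_one₀ (by positivity)] at hup
  refine ⟨ε, ⟨he ▸ hq, hc ▸ hq'⟩, ?_, ?_⟩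
  · rw [emb_sub, he]; linarith
  · rw [embConj_sub, hc, sub_pos]
    nlinarith [mul_le_mul_of_nonneg_right hup h.2.le]

lemma pair_eq_of_add_eq {u v u' v' : ℤ × ℤ} (hu : TotPos 5 u) (hv : TotPos 5 v)
    (hu' : TotPos 5 u') (hv' : TotPos 5 v') (nu : normFive u = 1) (nv : normFive v = 1)
    (nu' : normFive u' = 1) (nv' : normFive v' = 1) (h : u + v = u' + v') :
    ({u, v} : Multiset (ℤ × ℤ)) = {u', v'} := by
  have conj_eq : ∀ w, normFive w = 1 → embConj 5 w = (emb 5 w)⁻¹ := fun w hw =>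
    eq_inv_of_mul_eq_one_right (by rw [emb_mul_embConj_five, hw, Int.cast_one])
  have hsum : emb 5 u + emb 5 v = emb 5 u' + emb 5 v' := by rw [← emb_add, ← emb_add, h]
  have hsum' : embConj 5 u + embConj 5 v = embConj 5 u' + embConj 5 v' := by
    rw [← embConj_add, ← embConj_add, h]
  rw [conj_eq u nu, conj_eq v nv, conj_eq u' nu', conj_eq v' nv', inv_add_inv hu.1.ne' hv.1.ne',
    inv_add_inv hu'.1.ne' hv'.1.ne', hsum, div_eq_div_iff (mul_pos hu.1 hv.1).ne'
    (mul_pos hu'.1 hv'.1).ne'] at hsum'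
  replace hsum' := mul_left_cancel₀ (by linarith [hu'.1, hv'.1]) hsum'
  have key : (emb 5 u - emb 5 u') * (emb 5 u - emb 5 v') = 0 := by
    linear_combination emb 5 u * hsum + hsum'
  rcases mul_eq_zero.1 key with hk | hk
  · obtain rfl : u = u' := emb_five_injective (sub_eq_zero.1 hk)
    rw [add_left_cancel h]
  · obtain rfl : u = v' := emb_five_injective (sub_eq_zero.1 hk)
    rw [add_comm u' u] at h
    rw [add_left_cancel h, Multiset.pair_comm]

lemma exists_pair_partitions_ne {a b c : ℤ × ℤ} (ha : TotPos 5 a) (hb : TotPos 5 b)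
    (hc : TotPos 5 c) : ∃ p ∈ partitions 5 (a + b + c), ∃ q ∈ partitions 5 (a + b + c),
      Multiset.card p = 2 ∧ Multiset.card q = 2 ∧ p ≠ q := by
  by_cases hbc : b = c
  · subst hbc
    by_cases hab : a = b
    · subst hab
      -- `3a = φ² a + φ⁻² a`
      refine ⟨{a + a, a}, pair_mem_partitions (ha.add ha) ha rfl,
        {mulOmegaSq a, divOmegaSq a}, pair_mem_partitions (totPos_mulOmegaSq_iff.2 ha)
          (totPos_divOmegaSq_iff.2 ha) (mulOmegaSq_add_divOmegaSq a), rfl, rfl, fun h => ?_⟩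
      have hmem : mulOmegaSq a ∈ ({a + a, a} : Multiset (ℤ × ℤ)) := h ▸ Multiset.mem_cons_self _ _
      have hφ : 2 < φ ^ 2 := by rw [goldenRatio_sq]; linarith [one_lt_goldenRatio]
      simp only [Multiset.insert_eq_cons, Multiset.mem_cons, Multiset.mem_singleton] at hmem
      rcases hmem with hmem | hmem <;> have := congrArg (emb 5) hmem <;>
        simp only [emb_mulOmegaSq, emb_add] at this <;> nlinarith [ha.1]
    · exact ⟨{b + a, b}, pair_mem_partitions (hb.add ha) hb (by abel), {b + b, a},
        pair_mem_partitions (hb.add hb) ha (by abel), rfl, rfl,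
        pair_add_ne_pair_add hb.ne_zero hab⟩
  · exact ⟨{a + b, c}, pair_mem_partitions (ha.add hb) hc rfl, {a + c, b},
      pair_mem_partitions (ha.add hc) hb (add_right_comm a c b), rfl, rfl,
      pair_add_ne_pair_add ha.ne_zero hbc⟩

lemma two_lt_ncard_partitions_sdiff {α : ℤ × ℤ} (hfin : (partitions 5 α).Finite)
    {m : Multiset (ℤ × ℤ)} (hm : m ∈ partitions 5 α) (h3 : 3 ≤ Multiset.card m) :
    2 < (partitions 5 α \ {{α}}).ncard := by
  have hsub : 0 < Multiset.card (Multiset.powersetCard 3 m) := by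
    rw [Multiset.card_powersetCard]; exact Nat.choose_pos h3
  obtain ⟨s, hs⟩ := Multiset.card_pos_iff_exists_mem.1 hsub
  obtain ⟨hsm, hs3⟩ := Multiset.mem_powersetCard.1 hs
  obtain ⟨a, b, c, rfl⟩ := Multiset.card_eq_three.1 hs3
  set r := m - {a, b, c}
  have hmr : {a, b, c} + r = m := add_tsub_cancel_of_le hsm
  rw [← hmr] at hm
  have habc : ({a, b, c} : Multiset (ℤ × ℤ)).sum = a + b + c := by simp [add_assoc]
  obtain ⟨p, hp, q, hq, hp2, hq2, hpq⟩ := exists_pair_partitions_ne (hm.1 a (by simp))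
    (hm.1 b (by simp)) (hm.1 c (by simp))
  rw [← habc] at hp hq
  rw [Set.two_lt_ncard_iff hfin.sdiff]
  refine ⟨_, _, _, ⟨hm, ?_⟩, ⟨add_mem_partitions hm hp, ?_⟩, ⟨add_mem_partitions hm hq, ?_⟩,
    ?_, ?_, fun h => hpq (add_left_injective r h)⟩ <;>
  · intro h
    have := congrArg Multiset.card h
    simp only [Multiset.card_add, Multiset.insert_eq_cons, Multiset.card_cons,
      Multiset.card_singleton, hp2, hq2] at this
    omega

lemma exists_card_succ_of_normFive_ne_one {α u : ℤ × ℤ} {m : Multiset (ℤ × ℤ)}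
    (hm : m ∈ partitions 5 α) (hu : u ∈ m) (hN : normFive u ≠ 1) :
    ∃ m' ∈ partitions 5 α, Multiset.card m' = Multiset.card m + 1 := by
  obtain ⟨ε, hε, hrest⟩ := (hm.1 u hu).exists_totPos_sub hN
  obtain ⟨r, rfl⟩ := Multiset.exists_cons_of_mem hu
  rw [← Multiset.singleton_add] at hm
  refine ⟨_, add_mem_partitions hm (pair_mem_partitions hε hrest (by simp)), ?_⟩
  rw [Multiset.card_add, Multiset.card_pair, Multiset.card_cons]
  omega

lemma subsingleton_partitions_sdiff {α : ℤ × ℤ} (hα : TotPos 5 α)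
    (hshort : ∀ m ∈ partitions 5 α, Multiset.card m < 3) :
    (partitions 5 α \ {{α}}).Subsingleton := by
  have unit_pair : ∀ m ∈ partitions 5 α \ {{α}}, ∃ u v, m = {u, v} ∧ TotPos 5 u ∧ TotPos 5 v ∧
      normFive u = 1 ∧ normFive v = 1 ∧ u + v = α := by
    rintro m ⟨hm, hmα⟩
    have h2 : Multiset.card m = 2 := by
      have := card_ne_zero_of_mem_partitions hα hm
      have := mt (eq_singleton_of_mem_partitions hm) hmα
      have := hshort m hm
      omega
    have unit_of_mem : ∀ w ∈ m, normFive w = 1 := fun w hw => by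
      by_contra hN
      obtain ⟨m', hm', hcard⟩ := exists_card_succ_of_normFive_ne_one hm hw hN
      have := hshort m' hm'
      omega
    obtain ⟨u, v, rfl⟩ := Multiset.card_eq_two.1 h2
    exact ⟨u, v, rfl, hm.1 u (by simp), hm.1 v (by simp), unit_of_mem u (by simp),
      unit_of_mem v (by simp), by simpa using hm.2⟩
  intro m hm m' hm'
  obtain ⟨u, v, rfl, hu, hv, nu, nv, huv⟩ := unit_pair m hm
  obtain ⟨u', v', rfl, hu', hv', nu', nv', huv'⟩ := unit_pair m' hm'
  exact pair_eq_of_add_eq hu hv hu' hv' nu nv nu' nv' (huv.trans huv'.symm)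

lemma pK_five_ne_three {α : ℤ × ℤ} (hα : TotPos 5 α) : pK 5 α ≠ 3 := by
  rw [pK_eq_ncard]
  intro h3
  have hfin : (partitions 5 α).Finite := Set.finite_of_ncard_pos (by omega)
  have hsplit := Set.ncard_sdiff_singleton_add_one (singleton_mem_partitions hα) hfin
  by_cases hshort : ∀ m ∈ partitions 5 α, Multiset.card m < 3
  · have := (Set.ncard_le_one hfin.sdiff).2 fun m hm m' hm' =>
      subsingleton_partitions_sdiff hα hshort hm hm'
    omega
  · obtain ⟨m, hm, hlong⟩ : ∃ m ∈ partitions 5 α, 3 ≤ Multiset.card m := by simpa using hshort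
    have := two_lt_ncard_partitions_sdiff hfin hm hlong
    omega

end Five

theorem exists_three_partitions_iff_general (D : ℤ) (hD : 2 ≤ D) :
    (∃ α : ℤ × ℤ, TotPos D α ∧ pK D α = 3) ↔ D ≠ 5 := by
  constructor
  · rintro ⟨α, hα, h3⟩ rfl
    exact pK_five_ne_three hα h3
  · intro h5
    exact ⟨(3, 0), totPos_mk_zero (by norm_num), pK_three hD h5⟩

theorem exists_three_partitions_iff (D : ℤ) (hD : 2 ≤ D) (hsf : Squarefree D) :
    (∃ α : ℤ × ℤ, TotPos D α ∧ pK D α = 3) ↔ D ≠ 5 :=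
  exists_three_partitions_iff_general D hD
end

section
/- Let D ≥ 2 be a squarefree integer with D ≠ 5 and K = ℚ(√D), and let α = (⌈2ξ_D⌉ + 2) + 2ω_D. If ⌈ξ_D⌉ − ξ_D > 1/2, then p_K(α) = 6. -/
/-!
Write `c = ⌈ξ_D⌉` and apply the shear `(x, y) ↦ (x - (c - 1) y, y)`, which sends
`α = (2c + 1, 2)` to `(3, 2)`. Since `c - 1 < ξ_D ≤ ω_D` and `c ≥ 2` (as `ξ_D > 1` for
`D ≠ 5, 9`), totally positive elements land in the cone `x ≥ 1, x + 2y ≥ 1`; since moreover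
`ξ_D < c - 1/2`, every point with `x ≥ 1` and `0 ≤ y ≤ 2` comes from a totally positive
element. A partition of `(3, 2)` into parts from the cone has at most three parts, all in the
box `[1, 3] × [0, 2]`, and a finite check leaves exactly six of them.
-/

theorem totPos_iff {D : ℤ} {β : ℤ × ℤ} :
    TotPos D β ↔ 0 < β.1 + β.2 * omegaD D ∧ 0 < β.1 - β.2 * xiD D := by
  simp [TotPos, emb, embConj, xiD, sub_eq_add_neg]

theorem xiD_le_omegaD (D : ℤ) : xiD D ≤ omegaD D := by
  unfold xiD omegaD omegaD'
  split_ifs <;> linarith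

theorem omegaD_nonneg (D : ℤ) : 0 ≤ omegaD D := by
  unfold omegaD
  split_ifs <;> positivity

theorem one_lt_xiD {D : ℤ} (hD : 2 ≤ D) (hsf : Squarefree D) (hD5 : D ≠ 5) : 1 < xiD D := by
  unfold xiD omegaD'
  split_ifs with hD4
  · have hD9 : D ≠ 9 := by
      rintro rfl
      exact absurd (Int.isUnit_iff.mp (hsf 3 ⟨1, rfl⟩)) (by decide)
    have : (3 : ℝ) < √D := Real.lt_sqrt_of_sq_lt
      (by norm_num; exact_mod_cast (by omega : 9 < D))
    linarith
  · have : (1 : ℝ) < √D := Real.lt_sqrt_of_sq_lt (by norm_num; exact_mod_cast hD)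
    linarith

theorem ceil_two_mul_of_half_lt {K : Type*} [Field K] [LinearOrder K] [IsStrictOrderedRing K]
    [FloorRing K] {x : K} (h : 1 / 2 < ⌈x⌉ - x) : ⌈2 * x⌉ = 2 * ⌈x⌉ - 1 := by
  rw [Int.ceil_eq_iff]
  push_cast
  constructor <;> linarith [Int.ceil_lt_add_one x]

def shear (k : ℤ) : ℤ × ℤ ≃+ ℤ × ℤ where
  toFun p := (p.1 - k * p.2, p.2)
  invFun p := (p.1 + k * p.2, p.2)
  left_inv p := by simp
  right_inv p := by simp
  map_add' p q := Prod.ext (by simp only [Prod.fst_add, Prod.snd_add]; ring) rfl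

@[simp] theorem shear_apply (k : ℤ) (p : ℤ × ℤ) : shear k p = (p.1 - k * p.2, p.2) := rfl

@[simp] theorem shear_symm_apply (k : ℤ) (p : ℤ × ℤ) :
    (shear k).symm p = (p.1 + k * p.2, p.2) := rfl

def reducedCone : Set (ℤ × ℤ) := {p | 1 ≤ p.1 ∧ 1 ≤ p.1 + 2 * p.2}

-- `noncomputable` only because `Finset.Icc` on `ℤ` elaborates through a noncomputable order
-- instance; `decide` still evaluates membership in this box.
noncomputable def reducedParts : Finset (ℤ × ℤ) := Finset.Icc 1 3 ×ˢ Finset.Icc 0 2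

def reducedPartitions : Finset (Multiset (ℤ × ℤ)) :=
  {{(3, 2)}, {(1, 0), (2, 2)}, {(2, 0), (1, 2)}, {(1, 0), (1, 0), (1, 2)},
    {(1, 1), (2, 1)}, {(1, 0), (1, 1), (1, 1)}}

theorem card_reducedPartitions : reducedPartitions.card = 6 := rfl

theorem sum_eq_of_mem_reducedPartitions : ∀ m ∈ reducedPartitions, m.sum = (3, 2) := by
  decide

theorem mem_reducedParts_of_mem_reducedPartitions :
    ∀ m ∈ reducedPartitions, ∀ p ∈ m, p ∈ reducedParts := by
  decide

theorem pair_mem_reducedPartitions : ∀ a ∈ reducedParts, ∀ b ∈ reducedParts,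
    a + b = (3, 2) → ({a, b} : Multiset (ℤ × ℤ)) ∈ reducedPartitions := by
  decide

theorem triple_mem_reducedPartitions : ∀ a ∈ reducedParts, ∀ b ∈ reducedParts,
    ∀ d ∈ reducedParts, a + b + d = (3, 2) →
      ({a, b, d} : Multiset (ℤ × ℤ)) ∈ reducedPartitions := by
  decide

theorem mem_reducedPartitions_of_sum_eq {m : Multiset (ℤ × ℤ)}
    (hm : ∀ p ∈ m, p ∈ reducedCone) (hsum : m.sum = (3, 2)) : m ∈ reducedPartitions := by
  simp only [reducedCone, Set.mem_ofPred_eq] at hm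
  have hcard : Multiset.card m ≤ 3 := by
    have h := Multiset.card_nsmul_le_sum (s := m.map Prod.fst) (a := 1)
      (by simpa using fun p hp => (hm p hp).1)
    have h3 : (m.map Prod.fst).sum = 3 := by
      simpa [hsum] using (map_multiset_sum (AddMonoidHom.fst ℤ ℤ) m).symm
    simpa [h3] using h
  obtain h | h | h | h : Multiset.card m = 0 ∨ Multiset.card m = 1 ∨ Multiset.card m = 2 ∨
      Multiset.card m = 3 := by omega
  · simp [Multiset.card_eq_zero.mp h, Prod.ext_iff] at hsum
  · obtain ⟨a, rfl⟩ := Multiset.card_eq_one.mp h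
    rw [Multiset.sum_singleton] at hsum
    subst hsum
    decide
  · obtain ⟨⟨a₁, a₂⟩, ⟨b₁, b₂⟩, rfl⟩ := Multiset.card_eq_two.mp h
    simp only [Multiset.insert_eq_cons, Multiset.mem_cons, Multiset.mem_singleton,
      forall_eq_or_imp, forall_eq] at hm
    simp only [Multiset.insert_eq_cons, Multiset.sum_cons, Multiset.sum_singleton, Prod.mk_add_mk,
      Prod.ext_iff] at hsum
    refine pair_mem_reducedPartitions _ ?_ _ ?_ (by simp only [Prod.mk_add_mk, Prod.ext_iff]; omega)
      <;> simp only [reducedParts, Finset.mem_product, Finset.mem_Icc] <;> omega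
  · obtain ⟨⟨a₁, a₂⟩, ⟨b₁, b₂⟩, ⟨d₁, d₂⟩, rfl⟩ := Multiset.card_eq_three.mp h
    simp only [Multiset.insert_eq_cons, Multiset.mem_cons, Multiset.mem_singleton,
      forall_eq_or_imp, forall_eq] at hm
    simp only [Multiset.insert_eq_cons, Multiset.sum_cons, Multiset.sum_singleton, Prod.mk_add_mk,
      Prod.ext_iff] at hsum
    refine triple_mem_reducedPartitions _ ?_ _ ?_ _ ?_
      (by simp only [Prod.mk_add_mk, Prod.ext_iff]; omega)
      <;> simp only [reducedParts, Finset.mem_product, Finset.mem_Icc] <;> omega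

theorem card_partitions_eq_six_of_shear {S : ℤ × ℤ → Prop} {k : ℤ} {α : ℤ × ℤ}
    (hcone : ∀ β, S β → shear k β ∈ reducedCone)
    (hparts : ∀ p ∈ reducedParts, S ((shear k).symm p)) (hα : shear k α = (3, 2)) :
    Nat.card {m : Multiset (ℤ × ℤ) // (∀ β ∈ m, S β) ∧ m.sum = α} = 6 := by
  have hmem (m : Multiset (ℤ × ℤ)) :
      ((∀ β ∈ m, S β) ∧ m.sum = α) ↔ m.map (shear k) ∈ reducedPartitions := by
    rw [← (shear k).injective.eq_iff, map_multiset_sum, hα]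
    constructor
    · rintro ⟨hm, hsum⟩
      refine mem_reducedPartitions_of_sum_eq ?_ hsum
      simp only [Multiset.mem_map, forall_exists_index, and_imp]
      rintro _ β hβ rfl
      exact hcone β (hm β hβ)
    · intro h
      refine ⟨fun β hβ => ?_, sum_eq_of_mem_reducedPartitions _ h⟩
      simpa using hparts _ (mem_reducedParts_of_mem_reducedPartitions _ h _
        (Multiset.mem_map_of_mem _ hβ))
  rw [Nat.card_congr (Equiv.subtypeEquiv (Functor.mapEquiv Multiset (shear k).toEquiv) hmem),
    Nat.card_eq_fintype_card, Fintype.card_coe, card_reducedPartitions]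

theorem TotPos.shear_mem_reducedCone {D k : ℤ} {β : ℤ × ℤ} (hβ : TotPos D β)
    (hk : 1 ≤ k) (hkξ : k < xiD D) : shear k β ∈ reducedCone := by
  obtain ⟨x, y⟩ := β
  obtain ⟨hpos, hpos'⟩ := totPos_iff.mp hβ
  simp only [shear_apply, reducedCone, Set.mem_ofPred_eq] at hpos hpos' ⊢
  rcases le_or_gt 0 y with hy | hy
  · have hy' : (0 : ℝ) ≤ y := by exact_mod_cast hy
    have : (k * y : ℝ) < x := by nlinarith [mul_le_mul_of_nonneg_right hkξ.le hy']
    have : k * y < x := by exact_mod_cast this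
    omega
  · have hy' : (y : ℝ) < 0 := by exact_mod_cast hy
    have hω : (2 - k : ℝ) < omegaD D := by
      have : (1 : ℝ) ≤ k := by exact_mod_cast hk
      linarith [xiD_le_omegaD D]
    have : (k * y - 2 * y : ℝ) < x := by nlinarith [mul_lt_mul_of_neg_left hω hy']
    have : k * y - 2 * y < x := by exact_mod_cast this
    omega

theorem totPos_shear_symm {D k : ℤ} (hk : 0 ≤ k) (hξk : xiD D < k + 1 / 2) {p : ℤ × ℤ}
    (hp : p ∈ reducedParts) : TotPos D ((shear k).symm p) := by
  obtain ⟨x, y⟩ := p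
  simp only [reducedParts, Finset.mem_product, Finset.mem_Icc] at hp
  obtain ⟨⟨hx, -⟩, hy, hy'⟩ := hp
  have hx : (1 : ℝ) ≤ x := by exact_mod_cast hx
  have hk : (0 : ℝ) ≤ k := by exact_mod_cast hk
  rw [totPos_iff, shear_symm_apply]
  push_cast
  refine ⟨by nlinarith [omegaD_nonneg D, (by exact_mod_cast hy : (0 : ℝ) ≤ y)], ?_⟩
  interval_cases y <;> push_cast <;> linarith

theorem six_partitions (D : ℤ) (hD : 2 ≤ D) (hsf : Squarefree D) (hD5 : D ≠ 5)
    (h : (⌈xiD D⌉ : ℝ) - xiD D > 1 / 2) :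
    pK D (⌈2 * xiD D⌉ + 2, 2) = 6 := by
  have hc : (1 : ℤ) < ⌈xiD D⌉ := Int.lt_ceil.mpr (by exact_mod_cast one_lt_xiD hD hsf hD5)
  have hkξ : ((⌈xiD D⌉ - 1 : ℤ) : ℝ) < xiD D := by
    push_cast
    linarith [Int.ceil_lt_add_one (xiD D)]
  have hξk : xiD D < ((⌈xiD D⌉ - 1 : ℤ) : ℝ) + 1 / 2 := by
    push_cast
    linarith
  refine card_partitions_eq_six_of_shear (k := ⌈xiD D⌉ - 1)
    (fun β hβ => hβ.shear_mem_reducedCone (by omega) hkξ)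
    (fun p hp => totPos_shear_symm (by omega) hξk hp) ?_
  rw [shear_apply, ceil_two_mul_of_half_lt h]
  exact Prod.ext (by ring) rfl
end

section
/- Let n ∈ ℤ≥4 and let D ≥ 2 be a squarefree integer with D ≡ 2 or 3 (mod 4). If D ≤ ⌊n/2⌋², then the field K = ℚ(√D) satisfies p_K(n) > p(n). (Thus the bound ⌊n/2⌋² in the previous statement is optimal.) -/
/-!
The rational partitions of `n` are exactly the `K`-partitions of `n` all of whose summands lie
in `ℤ`. With `q = ⌊n/2⌋`, the bound `D < q²` (strict, as `D` is squarefree) gives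
`√D < q ≤ n - q`, so `n = (q + √D) + (n - q - √D)` is one more partition of `n` into totally
positive integers. Finiteness of `p_K` comes from `|y| < x` for totally positive `x + y√D`.
-/

theorem Multiset.finite_setOf_subset_finset_card_le {α : Type*} (S : Finset α) (N : ℕ) :
    {m : Multiset α | (∀ a ∈ m, a ∈ S) ∧ card m ≤ N}.Finite := by
  classical
  refine (Set.finite_Iic (N • S.val)).subset ?_
  rintro m ⟨hS, hN⟩
  refine Multiset.le_iff_count.2 fun a => ?_
  by_cases ha : a ∈ m
  · rw [Multiset.count_nsmul, Multiset.count_eq_one_of_mem S.nodup (hS a ha), mul_one]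
    exact (Multiset.count_le_card a m).trans hN
  · simp [Multiset.count_eq_zero.2 ha]

theorem finite_setOf_abs_snd_lt_fst_sum_eq (α : ℤ × ℤ) :
    {m : Multiset (ℤ × ℤ) | (∀ β ∈ m, |β.2| < β.1) ∧ m.sum = α}.Finite := by
  refine (Multiset.finite_setOf_subset_finset_card_le
    (Finset.Icc (1, -α.1) (α.1, α.1)) α.1.toNat).subset ?_
  rintro m ⟨hlt, rfl⟩
  have hpos : ∀ β ∈ m, 1 ≤ β.1 := fun β hβ =>
    Order.one_le_iff_pos.2 ((abs_nonneg _).trans_lt (hlt β hβ))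
  have hfst_pos : ∀ x ∈ m.map Prod.fst, 1 ≤ x := by
    simpa only [Multiset.forall_mem_map_iff] using hpos
  have hle : ∀ β ∈ m, β.1 ≤ m.sum.1 := fun β hβ => by
    rw [Multiset.fst_sum]
    exact Multiset.single_le_sum (fun x hx => zero_le_one.trans (hfst_pos x hx)) _
      (Multiset.mem_map_of_mem _ hβ)
  have hcard : Multiset.card m • (1 : ℤ) ≤ m.sum.1 := by
    rw [Multiset.fst_sum, ← Multiset.card_map Prod.fst]
    exact Multiset.card_nsmul_le_sum hfst_pos
  refine ⟨fun β hβ => ?_, by simp only [Int.nsmul_eq_mul, mul_one] at hcard; omega⟩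
  have := abs_lt.1 (hlt β hβ)
  have := hle β hβ
  have := hpos β hβ
  exact Finset.mem_Icc.2 ⟨⟨by omega, by omega⟩, ⟨by omega, by omega⟩⟩

section TotPos

variable {D : ℤ}

theorem totPos_natCast_zero {k : ℕ} (hk : 0 < k) : TotPos D ((k : ℤ), 0) := by
  simp [TotPos, emb, embConj, hk]

theorem totPos_iff_abs_mul_sqrt_lt (hD : D % 4 ≠ 1) (β : ℤ × ℤ) :
    TotPos D β ↔ |(β.2 : ℝ)| * √D < β.1 := by
  have habs : |(β.2 : ℝ)| * √D = |β.2 * √D| := by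
    rw [abs_mul, abs_of_nonneg (Real.sqrt_nonneg _)]
  rw [TotPos, emb, embConj, omegaD, omegaD', if_neg hD, if_neg hD, habs, abs_lt]
  constructor <;> rintro ⟨h₁, h₂⟩ <;> constructor <;> linarith

theorem TotPos.abs_snd_lt_fst (hD : D % 4 ≠ 1) (hD₁ : 1 ≤ D) {β : ℤ × ℤ} (hβ : TotPos D β) :
    |β.2| < β.1 := by
  have hsqrt : 1 ≤ √(D : ℝ) := Real.one_le_sqrt.2 (by exact_mod_cast hD₁)
  have hlt := (totPos_iff_abs_mul_sqrt_lt hD β).1 hβ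
  have : |(β.2 : ℝ)| < β.1 := by nlinarith [abs_nonneg (β.2 : ℝ)]
  exact_mod_cast this

theorem finite_setOf_totPos_sum_eq (hD : D % 4 ≠ 1) (hD₁ : 1 ≤ D) (α : ℤ × ℤ) :
    {m : Multiset (ℤ × ℤ) | (∀ β ∈ m, TotPos D β) ∧ m.sum = α}.Finite :=
  (finite_setOf_abs_snd_lt_fst_sum_eq α).subset fun _ ⟨hm, hsum⟩ =>
    ⟨fun β hβ => (hm β hβ).abs_snd_lt_fst hD hD₁, hsum⟩

end TotPos

namespace Nat.Partition

variable {n : ℕ}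

def toPairs (p : n.Partition) : Multiset (ℤ × ℤ) :=
  p.parts.map fun k : ℕ => ((k : ℤ), 0)

theorem toPairs_injective : Function.Injective (toPairs (n := n)) := fun p p' h =>
  Nat.Partition.ext <| Multiset.map_injective (fun k k' hk => by simpa using hk) h

theorem snd_eq_zero_of_mem_toPairs {p : n.Partition} {β : ℤ × ℤ} (hβ : β ∈ p.toPairs) :
    β.2 = 0 := by
  rw [toPairs, Multiset.mem_map] at hβ
  obtain ⟨k, -, rfl⟩ := hβ
  rfl

theorem toPairs_mem_setOf_totPos_sum_eq (D : ℤ) (p : n.Partition) :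
    p.toPairs ∈ {m : Multiset (ℤ × ℤ) | (∀ β ∈ m, TotPos D β) ∧ m.sum = ((n : ℤ), 0)} := by
  refine ⟨fun β hβ => ?_, ?_⟩
  · rw [toPairs, Multiset.mem_map] at hβ
    obtain ⟨k, hk, rfl⟩ := hβ
    exact totPos_natCast_zero (p.parts_pos hk)
  · simp [toPairs, Prod.ext_iff, Multiset.fst_sum, Multiset.snd_sum, Multiset.map_map,
      ← Nat.cast_multiset_sum, p.parts_sum]

end Nat.Partition

theorem card_partition_lt_pK {D : ℤ} (hD : D % 4 ≠ 1) (hD₁ : 1 ≤ D) {n : ℕ}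
    {m : Multiset (ℤ × ℤ)} (hm : (∀ β ∈ m, TotPos D β) ∧ m.sum = ((n : ℤ), 0))
    {β : ℤ × ℤ} (hβm : β ∈ m) (hβ : β.2 ≠ 0) :
    Fintype.card n.Partition < pK D ((n : ℤ), 0) := by
  have hnew : m ∉ Set.range (Nat.Partition.toPairs (n := n)) := by
    rintro ⟨p, rfl⟩
    exact hβ (Nat.Partition.snd_eq_zero_of_mem_toPairs hβm)
  calc Fintype.card n.Partition < Fintype.card n.Partition + 1 := Nat.lt_succ_self _
    _ = (insert m (Set.range Nat.Partition.toPairs)).ncard := by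
      rw [Set.ncard_insert_of_notMem hnew, Set.ncard_range_of_injective
        Nat.Partition.toPairs_injective, Nat.card_eq_fintype_card]
    _ ≤ _ := Set.ncard_le_ncard
      (Set.insert_subset hm
        (Set.range_subset_iff.2 (Nat.Partition.toPairs_mem_setOf_totPos_sum_eq D)))
      (finite_setOf_totPos_sum_eq hD hD₁ _)
    _ = pK D ((n : ℤ), 0) := Nat.card_coe_set_eq _

theorem Squarefree.lt_sq_of_le_sq {D q : ℤ} (hsf : Squarefree D) (hD : D ≠ 1) (h : D ≤ q ^ 2) :
    D < q ^ 2 := by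
  refine h.lt_of_ne ?_
  rintro rfl
  rcases Int.isUnit_iff.1 (hsf q (by rw [sq])) with rfl | rfl <;> norm_num at hD

theorem pK_gt_p_of_le_En_general (n : ℕ) (D : ℤ) (hD : 2 ≤ D)
    (hsf : Squarefree D) (hmod : D % 4 = 2 ∨ D % 4 = 3)
    (hbound : D ≤ ((n / 2 : ℕ) : ℤ) ^ 2) :
    pK D ((n : ℤ), 0) > Fintype.card (Nat.Partition n) := by
  have hD4 : D % 4 ≠ 1 := by omega
  set q : ℕ := n / 2
  have hsqrt : √(D : ℝ) < q := by
    have hDq : (D : ℝ) < (q : ℝ) ^ 2 := by exact_mod_cast hsf.lt_sq_of_le_sq (by omega) hbound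
    exact (Real.sqrt_lt_sqrt (by positivity) hDq).trans_eq (Real.sqrt_sq q.cast_nonneg)
  have hqn : (q : ℝ) ≤ n - q := by
    have : 2 * q ≤ n := Nat.mul_div_le n 2
    rw [le_sub_iff_add_le]
    exact_mod_cast (by omega : q + q ≤ n)
  refine card_partition_lt_pK hD4 (by omega) (m := {((q : ℤ), 1), ((n : ℤ) - q, -1)})
    ⟨?_, by simp⟩ (β := ((q : ℤ), 1)) (by simp) one_ne_zero
  simp only [Multiset.insert_eq_cons, Multiset.mem_cons, Multiset.mem_singleton,
    forall_eq_or_imp, forall_eq, totPos_iff_abs_mul_sqrt_lt hD4]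
  push_cast
  simp only [abs_one, abs_neg, one_mul]
  exact ⟨hsqrt, by linarith⟩

theorem pK_gt_p_of_le_En (n : ℕ) (hn : 4 ≤ n) (D : ℤ) (hD : 2 ≤ D)
    (hsf : Squarefree D) (hmod : D % 4 = 2 ∨ D % 4 = 3)
    (hbound : D ≤ ((n / 2 : ℕ) : ℤ) ^ 2) :
    pK D ((n : ℤ), 0) > Fintype.card (Nat.Partition n) :=
  pK_gt_p_of_le_En_general n D hD hsf hmod hbound
end
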